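/- arXiv:1407.7194 — 3 statements merged into one kernel-verified Lean document; each statement's English description precedes it below -/
import Mathlib

section
/- Let E and H be real symmetric positive definite p×p matrices, and let z ∈ ℂ with z ≠ 0, z ≠ 1 be such that (1−z)E − zH is invertible and (1−z)H^{−1} − zE^{−1} is invertible. Then (E + H) ((1−z)E − zH)^{−1} (E + H) = (1−z)^{−1} E − z^{−1} H + (z(1−z))^{−1} ((1−z)H^{−1} − zE^{−1})^{−1}. -/
open Matrix

noncomputable section

/-- Complexification of a real matrix. -/
def cx {a b : ℕ} (M : Matrix (Fin a) (Fin b) ℝ) : Matrix (Fin a) (Fin b) ℂ :=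
  M.map (fun x => (x : ℂ))

/-- for real symmetric positive definite `E`, `H` and `z ∈ ℂ`, `z ≠ 0,1`,
with `(1−z)E − zH` and `(1−z)H⁻¹ − zE⁻¹` invertible,
`(E+H)((1−z)E − zH)⁻¹(E+H) = (1−z)⁻¹E − z⁻¹H + (z(1−z))⁻¹((1−z)H⁻¹ − zE⁻¹)⁻¹`. -/
theorem stmt16 (p : ℕ) (E H : Matrix (Fin p) (Fin p) ℝ)
    (hE : E.PosDef) (hH : H.PosDef)
    (z : ℂ) (hz0 : z ≠ 0) (hz1 : z ≠ 1)
    (h1 : IsUnit ((1 - z) • cx E - z • cx H).det)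
    (h2 : IsUnit ((1 - z) • (cx H)⁻¹ - z • (cx E)⁻¹).det) :
    (cx E + cx H) * ((1 - z) • cx E - z • cx H)⁻¹ * (cx E + cx H) =
      (1 - z)⁻¹ • cx E - z⁻¹ • cx H +
        (z * (1 - z))⁻¹ • ((1 - z) • (cx H)⁻¹ - z • (cx E)⁻¹)⁻¹ := by
  set M := cx E with hM
  set N := cx H with hN
  have hz1' : (1 : ℂ) - z ≠ 0 := sub_ne_zero.mpr (fun h => hz1 h.symm)
  -- invertibility of M and N
  have hMd : IsUnit M.det := by
    have : M.det = (E.det : ℂ) := (RingHom.map_det (Complex.ofRealHom) E).symm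
    rw [this]
    exact isUnit_iff_ne_zero.mpr (by exact_mod_cast hE.det_pos.ne')
  have hNd : IsUnit N.det := by
    have : N.det = (H.det : ℂ) := (RingHom.map_det (Complex.ofRealHom) H).symm
    rw [this]
    exact isUnit_iff_ne_zero.mpr (by exact_mod_cast hH.det_pos.ne')
  set A := (1 - z) • M - z • N with hA
  set X := A⁻¹ with hX
  have hX1 : A * X = 1 := mul_nonsing_inv _ h1
  have hX2 : X * A = 1 := nonsing_inv_mul _ h1
  have hM1 : M * M⁻¹ = 1 := mul_nonsing_inv _ hMd
  have hM2 : M⁻¹ * M = 1 := nonsing_inv_mul _ hMd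
  have hN1 : N * N⁻¹ = 1 := mul_nonsing_inv _ hNd
  have hN2 : N⁻¹ * N = 1 := nonsing_inv_mul _ hNd
  set B := (1 - z) • N⁻¹ - z • M⁻¹ with hB
  -- B expressed two ways
  have hB1 : B = N⁻¹ * A * M⁻¹ := by
    rw [hB, hA]
    simp [Matrix.mul_sub, Matrix.sub_mul, Matrix.mul_smul, Matrix.smul_mul, mul_assoc,
      Matrix.nonsing_inv_mul_cancel_left _ _ hNd, hM1]
  have hB2 : B = M⁻¹ * A * N⁻¹ := by
    rw [hB, hA]
    simp [Matrix.mul_sub, Matrix.sub_mul, Matrix.mul_smul, Matrix.smul_mul, mul_assoc,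
      Matrix.nonsing_inv_mul_cancel_left _ _ hMd, hN1]
  have hBinv1 : B⁻¹ = M * X * N := by
    rw [hB1, Matrix.mul_inv_rev, Matrix.mul_inv_rev,
      nonsing_inv_nonsing_inv _ hMd, nonsing_inv_nonsing_inv _ hNd, hX, mul_assoc]
  have hBinv2 : B⁻¹ = N * X * M := by
    rw [hB2, Matrix.mul_inv_rev, Matrix.mul_inv_rev,
      nonsing_inv_nonsing_inv _ hMd, nonsing_inv_nonsing_inv _ hNd, hX, mul_assoc]
  have hswap : N * X * M = M * X * N := by rw [← hBinv1, ← hBinv2]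
  -- key substitutions
  have hA1 : (1 - z) • M = A + z • N := by rw [hA]; ring_nf; abel
  have hA2 : z • N = (1 - z) • M - A := by rw [hA]; abel
  have key1 : (1 - z) • (M * X * M) = M + z • (M * X * N) := by
    rw [← smul_mul_assoc, ← smul_mul_assoc, hA1, add_mul, add_mul, hX1, one_mul,
      smul_mul_assoc, smul_mul_assoc, hswap]
  have key2 : z • (N * X * N) = (1 - z) • (M * X * N) - N := by
    rw [← smul_mul_assoc, ← smul_mul_assoc, hA2, sub_mul, sub_mul, hX1, one_mul,
      smul_mul_assoc, smul_mul_assoc]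
  have eq1 : M * X * M = (1 - z)⁻¹ • M + ((1 - z)⁻¹ * z) • (M * X * N) := by
    have := congrArg (fun Y => (1 - z)⁻¹ • Y) key1
    simpa [smul_smul, inv_mul_cancel₀ hz1', smul_add] using this
  have eq2 : N * X * N = (z⁻¹ * (1 - z)) • (M * X * N) - z⁻¹ • N := by
    have := congrArg (fun Y => z⁻¹ • Y) key2
    simpa [smul_smul, inv_mul_cancel₀ hz0, smul_sub] using this
  show (M + N) * X * (M + N) = (1 - z)⁻¹ • M - z⁻¹ • N + (z * (1 - z))⁻¹ • B⁻¹
  rw [hBinv1, add_mul, add_mul, Matrix.mul_add, Matrix.mul_add, eq1, eq2, hswap]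
  match_scalars <;> field_simp <;> ring

end
end

section
/- Let W be a real p×n matrix and Y a real q×n matrix such that S_ww = n^{−1}WW′ and S_yy = n^{−1}YY′ are positive definite. Set S_wy = n^{−1}WY′, S_yw = S_wy′, E = S_wy S_yy^{−1} S_yw and 𝓔 = S_yw S_ww^{−1} S_wy. Let z ∈ ℂ be such that E − zS_ww and 𝓔 − zS_yy are invertible. Then S_yw (E − z S_ww)^{−1} S_wy = S_yy + z · S_yy (𝓔 − z S_yy)^{−1} S_yy. -/
open Matrix

noncomputable section

/-- Sample cross-covariance matrix `n⁻¹ A Bᵀ` of the data matrices `A` and `B`. -/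
def sC {a b n : ℕ} (A : Matrix (Fin a) (Fin n) ℝ) (B : Matrix (Fin b) (Fin n) ℝ) :
    Matrix (Fin a) (Fin b) ℝ := (n : ℝ)⁻¹ • (A * Bᵀ)

lemma cx_det_isUnit {a : ℕ} {M : Matrix (Fin a) (Fin a) ℝ} (h : M.PosDef) :
    IsUnit (cx M).det := by
  have : (cx M).det = (Complex.ofRealHom.mapMatrix M).det := rfl
  rw [this, ← RingHom.map_det]
  simpa using isUnit_iff_ne_zero.mpr (Complex.ofReal_ne_zero.mpr h.det_pos.ne')

/-- with `E = S_wy S_yy⁻¹ S_yw` and `𝓔 = S_yw S_ww⁻¹ S_wy`, if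
`E − zS_ww` and `𝓔 − zS_yy` are invertible then
`S_yw (E − zS_ww)⁻¹ S_wy = S_yy + z S_yy (𝓔 − zS_yy)⁻¹ S_yy`. -/
theorem stmt17 (p q n : ℕ)
    (W : Matrix (Fin p) (Fin n) ℝ) (Y : Matrix (Fin q) (Fin n) ℝ)
    (hW : (sC W W).PosDef) (hY : (sC Y Y).PosDef)
    (z : ℂ)
    (h1 : IsUnit (cx (sC W Y) * (cx (sC Y Y))⁻¹ * cx (sC Y W) - z • cx (sC W W)).det)
    (h2 : IsUnit (cx (sC Y W) * (cx (sC W W))⁻¹ * cx (sC W Y) - z • cx (sC Y Y)).det) :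
    cx (sC Y W) *
        (cx (sC W Y) * (cx (sC Y Y))⁻¹ * cx (sC Y W) - z • cx (sC W W))⁻¹ *
        cx (sC W Y) =
      cx (sC Y Y) +
        z • (cx (sC Y Y) *
          (cx (sC Y W) * (cx (sC W W))⁻¹ * cx (sC W Y) - z • cx (sC Y Y))⁻¹ *
          cx (sC Y Y)) := by
  set a := cx (sC W W) with ha_def
  set b := cx (sC Y Y) with hb_def
  set c := cx (sC W Y) with hc_def
  set c' := cx (sC Y W) with hc'_def
  have hadet : IsUnit a.det := cx_det_isUnit hW
  have hbdet : IsUnit b.det := cx_det_isUnit hY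
  set M := c * b⁻¹ * c' - z • a with hM_def
  set N := c' * a⁻¹ * c - z • b with hN_def
  have hbb : b * b⁻¹ = 1 := mul_nonsing_inv _ hbdet
  have haa : a⁻¹ * a = 1 := nonsing_inv_mul _ hadet
  have hMM : M⁻¹ * M = 1 := nonsing_inv_mul _ h1
  have hMM' : M * M⁻¹ = 1 := mul_nonsing_inv _ h1
  have hNN : N * N⁻¹ = 1 := mul_nonsing_inv _ h2
  have hNN' : N⁻¹ * N = 1 := nonsing_inv_mul _ h2
  -- the push-through identity
  have key : N * (b⁻¹ * c') = c' * a⁻¹ * M := by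
    rw [hM_def, hN_def, Matrix.sub_mul, Matrix.mul_sub]
    congr 1
    · simp only [Matrix.mul_assoc]
    · rw [Matrix.smul_mul, Matrix.mul_smul]
      congr 1
      rw [← Matrix.mul_assoc, hbb, Matrix.one_mul, Matrix.mul_assoc, haa,
        Matrix.mul_one]
  have key2 : c' * M⁻¹ = b * (N⁻¹ * (c' * a⁻¹)) := by
    have h3 : b⁻¹ * c' = N⁻¹ * (c' * a⁻¹ * M) := by
      rw [← key, ← Matrix.mul_assoc, hNN', Matrix.one_mul]
    have h4 : b⁻¹ * c' * M⁻¹ = N⁻¹ * (c' * a⁻¹) := by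
      rw [h3, Matrix.mul_assoc, Matrix.mul_assoc, hMM', Matrix.mul_one]
    calc c' * M⁻¹ = b * (b⁻¹ * c' * M⁻¹) := by
          rw [← Matrix.mul_assoc, ← Matrix.mul_assoc, hbb, Matrix.one_mul]
      _ = b * (N⁻¹ * (c' * a⁻¹)) := by rw [h4]
  have hE : c' * a⁻¹ * c = N + z • b := by rw [hN_def]; abel
  calc c' * M⁻¹ * c = b * (N⁻¹ * (c' * a⁻¹)) * c := by rw [key2]
    _ = b * N⁻¹ * (c' * a⁻¹ * c) := by simp only [Matrix.mul_assoc]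
    _ = b * N⁻¹ * (N + z • b) := by rw [hE]
    _ = b * (N⁻¹ * N) + z • (b * N⁻¹ * b) := by
        rw [Matrix.mul_add, Matrix.mul_smul, Matrix.mul_assoc]
    _ = b + z • (b * N⁻¹ * b) := by rw [hNN', Matrix.mul_one]

end
end

section
/- Let 0 < c₂ < c₁ < 1 with c₁ + c₂ < 1, and set d_r = c₁ + c₂ − 2c₁c₂ + 2√(c₁c₂(1−c₁)(1−c₂)), d_ℓ = c₁ + c₂ − 2c₁c₂ − 2√(c₁c₂(1−c₁)(1−c₂)), t_c = √((c₁c₂ + √(c₁c₂(1−c₁)(1−c₂)))/(1 − c₁ − c₂)), and r_c = (c₁c₂ + √(c₁c₂(1−c₁)(1−c₂))) / ((1−c₁)(1−c₂) + √(c₁c₂(1−c₁)(1−c₂))). For t > 0 define γ(t) = (1 + t^{−2}c₁)(1 + t^{−2}c₂)/(1 + t^{−2}). Then: (a) γ(t) ≥ d_r for all t > 0, with equality if and only if t = t_c; (b) if t ≥ t_c then γ(t) − (c₁ + c₂) − 2c₁c₂ t^{−2} ≥ 0 and γ(t) satisfies γ − (c₁+c₂) − √((γ − d_ℓ)(γ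 − d_r)) = 2c₁c₂ t^{−2}; (c) γ(t) < 1 if and only if t > √(c₁c₂/(1 − c₁ − c₂)), and t_c > √(c₁c₂/(1 − c₁ − c₂)); (d) writing r = t²/(1 + t²), one has γ(t) = r(1 − c₁ + c₁ r^{−1})(1 − c₂ + c₂ r^{−1}), and r_c = t_c²/(1 + t_c²); in particular, since t ↦ t²/(1+t²) is strictly increasing on [0, ∞), r > r_c implies t > t_c and hence γ(t) > d_r. -/
noncomputable section

/-! Put `s = t⁻²`, `P = c₁c₂` and `S = √(c₁c₂(1-c₁)(1-c₂))`, so that `S² = P(1-c₁)(1-c₂)`.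
Clearing denominators, `(γ - d_r)(1+s)P = (P(1+s) - S)²` and
`(γ - c₁ - c₂ - 2Ps)(1+s) = (1-c₁)(1-c₂) - P(1+s)²`, while `(γ - d_ℓ)(γ - d_r)` is the square of
`γ - c₁ - c₂ - 2Ps`. Everything then comes down to comparing `P(1+t⁻²)`, which decreases in `t`,
with `S`: they agree exactly at `t = t_c`. -/

namespace GammaCrit

open Set

/-- `γ(t)` written in the variable `s = t⁻²`. -/
def gam (c₁ c₂ s : ℝ) : ℝ := (1 + s * c₁) * (1 + s * c₂) / (1 + s)

def sqrtProd (c₁ c₂ : ℝ) : ℝ := √(c₁ * c₂ * (1 - c₁) * (1 - c₂))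

def dRight (c₁ c₂ : ℝ) : ℝ := c₁ + c₂ - 2 * c₁ * c₂ + 2 * sqrtProd c₁ c₂

def dLeft (c₁ c₂ : ℝ) : ℝ := c₁ + c₂ - 2 * c₁ * c₂ - 2 * sqrtProd c₁ c₂

def tCrit (c₁ c₂ : ℝ) : ℝ := √((c₁ * c₂ + sqrtProd c₁ c₂) / (1 - c₁ - c₂))

def rCrit (c₁ c₂ : ℝ) : ℝ :=
  (c₁ * c₂ + sqrtProd c₁ c₂) / ((1 - c₁) * (1 - c₂) + sqrtProd c₁ c₂)

section Algebra

variable {c₁ c₂ s S : ℝ}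

theorem gam_sub_mul_one_add (hs : 1 + s ≠ 0) :
    (gam c₁ c₂ s - (c₁ + c₂) - 2 * c₁ * c₂ * s) * (1 + s) =
      (1 - c₁) * (1 - c₂) - c₁ * c₂ * (1 + s) ^ 2 := by
  unfold gam
  field_simp
  ring

theorem gam_sub_mul_eq_sq (hS : S ^ 2 = c₁ * c₂ * (1 - c₁) * (1 - c₂)) (hs : 1 + s ≠ 0) :
    (gam c₁ c₂ s - (c₁ + c₂ - 2 * c₁ * c₂ + 2 * S)) * ((1 + s) * (c₁ * c₂)) =
      (c₁ * c₂ * (1 + s) - S) ^ 2 := by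
  linear_combination c₁ * c₂ * gam_sub_mul_one_add (c₁ := c₁) (c₂ := c₂) hs - hS

theorem gam_sub_mul_gam_sub (hS : S ^ 2 = c₁ * c₂ * (1 - c₁) * (1 - c₂)) (hs : 1 + s ≠ 0) :
    (gam c₁ c₂ s - (c₁ + c₂ - 2 * c₁ * c₂ + 2 * S)) *
        (gam c₁ c₂ s - (c₁ + c₂ - 2 * c₁ * c₂ - 2 * S)) =
      (gam c₁ c₂ s - (c₁ + c₂) - 2 * c₁ * c₂ * s) ^ 2 := by
  unfold gam
  field_simp
  linear_combination (-4 * (1 + s) ^ 2) * hS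

theorem gam_lt_one_iff (hs : 0 < s) : gam c₁ c₂ s < 1 ↔ c₁ * c₂ * s < 1 - c₁ - c₂ := by
  have h : (1 + s * c₁) * (1 + s * c₂) - (1 + s) = s * (c₁ * c₂ * s - (1 - c₁ - c₂)) := by ring
  rw [gam, div_lt_one (by linarith), ← sub_neg, h, ← mul_zero s, mul_lt_mul_iff_of_pos_left hs,
    sub_neg]

theorem gam_inv_sq {t : ℝ} (ht : t ≠ 0) :
    gam c₁ c₂ (t ^ 2)⁻¹ = t ^ 2 / (1 + t ^ 2) * (1 - c₁ + c₁ / (t ^ 2 / (1 + t ^ 2))) *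
      (1 - c₂ + c₂ / (t ^ 2 / (1 + t ^ 2))) := by
  unfold gam
  field_simp
  ring

end Algebra

section Critical

variable {c₁ c₂ t : ℝ}

theorem sq_sqrtProd (h₁ : 0 ≤ c₁) (h₂ : 0 ≤ c₂) (h : c₁ + c₂ ≤ 1) :
    sqrtProd c₁ c₂ ^ 2 = c₁ * c₂ * (1 - c₁) * (1 - c₂) :=
  Real.sq_sqrt (mul_nonneg (mul_nonneg (mul_nonneg h₁ h₂) (by linarith)) (by linarith))

theorem mul_lt_sqrtProd (h₁ : 0 < c₁) (h₂ : 0 < c₂) (h : c₁ + c₂ < 1) :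
    c₁ * c₂ < sqrtProd c₁ c₂ := by
  have hP : 0 < c₁ * c₂ := mul_pos h₁ h₂
  rw [sqrtProd, Real.lt_sqrt hP.le]
  nlinarith [mul_pos hP (sub_pos.2 h)]

theorem sq_tCrit (h₁ : 0 < c₁) (h₂ : 0 < c₂) (h : c₁ + c₂ < 1) :
    tCrit c₁ c₂ ^ 2 = (c₁ * c₂ + sqrtProd c₁ c₂) / (1 - c₁ - c₂) :=
  Real.sq_sqrt (div_nonneg (add_nonneg (mul_pos h₁ h₂).le (Real.sqrt_nonneg _)) (by linarith))

theorem tCrit_pos (h₁ : 0 < c₁) (h₂ : 0 < c₂) (h : c₁ + c₂ < 1) : 0 < tCrit c₁ c₂ :=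
  Real.sqrt_pos.2 (div_pos (add_pos_of_pos_of_nonneg (mul_pos h₁ h₂) (Real.sqrt_nonneg _)) (by linarith))

theorem mul_one_add_inv_sq_tCrit (h₁ : 0 < c₁) (h₂ : 0 < c₂) (h : c₁ + c₂ < 1) :
    c₁ * c₂ * (1 + (tCrit c₁ c₂ ^ 2)⁻¹) = sqrtProd c₁ c₂ := by
  have hS := sq_sqrtProd h₁.le h₂.le h.le
  have hPS : c₁ * c₂ + sqrtProd c₁ c₂ ≠ 0 := by linarith [mul_lt_sqrtProd h₁ h₂ h, mul_pos h₁ h₂]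
  have hD : 1 - c₁ - c₂ ≠ 0 := by linarith
  rw [sq_tCrit h₁ h₂ h, inv_div]
  field_simp
  linear_combination -hS

theorem strictAntiOn_mul_one_add_inv_sq {a : ℝ} (ha : 0 < a) :
    StrictAntiOn (fun t : ℝ => a * (1 + (t ^ 2)⁻¹)) (Ioi 0) := by
  intro x hx y _ hxy
  have hx : 0 < x := hx
  dsimp only
  gcongr

theorem tCrit_le_iff (h₁ : 0 < c₁) (h₂ : 0 < c₂) (h : c₁ + c₂ < 1) (ht : 0 < t) :
    tCrit c₁ c₂ ≤ t ↔ c₁ * c₂ * (1 + (t ^ 2)⁻¹) ≤ sqrtProd c₁ c₂ := by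
  rw [← mul_one_add_inv_sq_tCrit h₁ h₂ h]
  exact ((strictAntiOn_mul_one_add_inv_sq (mul_pos h₁ h₂)).le_iff_ge ht (tCrit_pos h₁ h₂ h)).symm

theorem eq_tCrit_iff (h₁ : 0 < c₁) (h₂ : 0 < c₂) (h : c₁ + c₂ < 1) (ht : 0 < t) :
    t = tCrit c₁ c₂ ↔ c₁ * c₂ * (1 + (t ^ 2)⁻¹) = sqrtProd c₁ c₂ := by
  rw [← mul_one_add_inv_sq_tCrit h₁ h₂ h, eq_comm]
  exact ((strictAntiOn_mul_one_add_inv_sq (mul_pos h₁ h₂)).eq_iff_eq ht (tCrit_pos h₁ h₂ h)).symm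

theorem gam_sub_dRight_mul (h₁ : 0 < c₁) (h₂ : 0 < c₂) (h : c₁ + c₂ < 1) (t : ℝ) :
    (gam c₁ c₂ (t ^ 2)⁻¹ - dRight c₁ c₂) * ((1 + (t ^ 2)⁻¹) * (c₁ * c₂)) =
      (c₁ * c₂ * (1 + (t ^ 2)⁻¹) - sqrtProd c₁ c₂) ^ 2 :=
  gam_sub_mul_eq_sq (sq_sqrtProd h₁.le h₂.le h.le) (by positivity)

theorem dRight_le_gam (h₁ : 0 < c₁) (h₂ : 0 < c₂) (h : c₁ + c₂ < 1) (t : ℝ) :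
    dRight c₁ c₂ ≤ gam c₁ c₂ (t ^ 2)⁻¹ := by
  have hQ : 0 < (1 + (t ^ 2)⁻¹) * (c₁ * c₂) := by positivity
  have key := gam_sub_dRight_mul h₁ h₂ h t
  exact sub_nonneg.1 (nonneg_of_mul_nonneg_left (key ▸ sq_nonneg _) hQ)

theorem gam_eq_dRight_iff (h₁ : 0 < c₁) (h₂ : 0 < c₂) (h : c₁ + c₂ < 1) (ht : 0 < t) :
    gam c₁ c₂ (t ^ 2)⁻¹ = dRight c₁ c₂ ↔ t = tCrit c₁ c₂ := by
  have hQ : (1 + (t ^ 2)⁻¹) * (c₁ * c₂) ≠ 0 := by positivity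
  rw [eq_tCrit_iff h₁ h₂ h ht, ← sub_eq_zero, ← mul_left_inj' hQ, zero_mul,
    gam_sub_dRight_mul h₁ h₂ h, sq_eq_zero_iff, sub_eq_zero]

theorem dRight_lt_gam (h₁ : 0 < c₁) (h₂ : 0 < c₂) (h : c₁ + c₂ < 1) (htc : tCrit c₁ c₂ < t) :
    dRight c₁ c₂ < gam c₁ c₂ (t ^ 2)⁻¹ :=
  (dRight_le_gam h₁ h₂ h t).lt_of_ne fun he =>
    htc.ne' ((gam_eq_dRight_iff h₁ h₂ h ((tCrit_pos h₁ h₂ h).trans htc)).1 he.symm)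

theorem gam_sub_nonneg (h₁ : 0 < c₁) (h₂ : 0 < c₂) (h : c₁ + c₂ < 1) (htc : tCrit c₁ c₂ ≤ t) :
    0 ≤ gam c₁ c₂ (t ^ 2)⁻¹ - (c₁ + c₂) - 2 * c₁ * c₂ * (t ^ 2)⁻¹ := by
  have hQ : 0 < (1 + (t ^ 2)⁻¹) * (c₁ * c₂) := by positivity
  have hPS := (tCrit_le_iff h₁ h₂ h ((tCrit_pos h₁ h₂ h).trans_le htc)).1 htc
  have key : (gam c₁ c₂ (t ^ 2)⁻¹ - (c₁ + c₂) - 2 * c₁ * c₂ * (t ^ 2)⁻¹) *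
      ((1 + (t ^ 2)⁻¹) * (c₁ * c₂)) = (sqrtProd c₁ c₂ - c₁ * c₂ * (1 + (t ^ 2)⁻¹)) *
        (sqrtProd c₁ c₂ + c₁ * c₂ * (1 + (t ^ 2)⁻¹)) := by
    linear_combination c₁ * c₂ * gam_sub_mul_one_add (c₁ := c₁) (c₂ := c₂)
      (by positivity : 1 + (t ^ 2)⁻¹ ≠ 0) - sq_sqrtProd h₁.le h₂.le h.le
  refine nonneg_of_mul_nonneg_left (key ▸ mul_nonneg (sub_nonneg.2 hPS) ?_) hQ
  exact add_nonneg (Real.sqrt_nonneg _) (by positivity)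

theorem gam_sub_sqrt (h₁ : 0 < c₁) (h₂ : 0 < c₂) (h : c₁ + c₂ < 1) (htc : tCrit c₁ c₂ ≤ t) :
    gam c₁ c₂ (t ^ 2)⁻¹ - (c₁ + c₂) -
        √((gam c₁ c₂ (t ^ 2)⁻¹ - dLeft c₁ c₂) * (gam c₁ c₂ (t ^ 2)⁻¹ - dRight c₁ c₂)) =
      2 * c₁ * c₂ * (t ^ 2)⁻¹ := by
  have key : (gam c₁ c₂ (t ^ 2)⁻¹ - dLeft c₁ c₂) * (gam c₁ c₂ (t ^ 2)⁻¹ - dRight c₁ c₂) =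
      (gam c₁ c₂ (t ^ 2)⁻¹ - (c₁ + c₂) - 2 * c₁ * c₂ * (t ^ 2)⁻¹) ^ 2 := by
    rw [mul_comm]
    exact gam_sub_mul_gam_sub (sq_sqrtProd h₁.le h₂.le h.le) (by positivity)
  rw [key, Real.sqrt_sq (gam_sub_nonneg h₁ h₂ h htc)]
  ring

theorem gam_lt_one_iff_sqrt_lt (h : c₁ + c₂ < 1) (ht : 0 < t) :
    gam c₁ c₂ (t ^ 2)⁻¹ < 1 ↔ √(c₁ * c₂ / (1 - c₁ - c₂)) < t := by
  rw [gam_lt_one_iff (by positivity), Real.sqrt_lt' ht, mul_inv_lt_iff₀ (by positivity),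
    div_lt_iff₀' (by linarith)]

theorem sqrt_lt_tCrit (h₁ : 0 < c₁) (h₂ : 0 < c₂) (h : c₁ + c₂ < 1) :
    √(c₁ * c₂ / (1 - c₁ - c₂)) < tCrit c₁ c₂ := by
  have hP : 0 < c₁ * c₂ := mul_pos h₁ h₂
  have hS : 0 < sqrtProd c₁ c₂ := hP.trans (mul_lt_sqrtProd h₁ h₂ h)
  exact Real.sqrt_lt_sqrt (div_nonneg hP.le (by linarith))
    (div_lt_div_of_pos_right (lt_add_of_pos_right _ hS) (by linarith))

theorem rCrit_eq (h₁ : 0 < c₁) (h₂ : 0 < c₂) (h : c₁ + c₂ < 1) :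
    rCrit c₁ c₂ = tCrit c₁ c₂ ^ 2 / (1 + tCrit c₁ c₂ ^ 2) := by
  have hS : 0 ≤ sqrtProd c₁ c₂ := Real.sqrt_nonneg _
  have hD : 0 < 1 - c₁ - c₂ := by linarith
  have hP : 0 < c₁ * c₂ := mul_pos h₁ h₂
  have h' : (1 - c₁) * (1 - c₂) + sqrtProd c₁ c₂ ≠ 0 := by nlinarith
  rw [rCrit, sq_tCrit h₁ h₂ h]
  field_simp
  ring

theorem strictMonoOn_sq_div_one_add_sq : StrictMonoOn (fun t : ℝ => t ^ 2 / (1 + t ^ 2)) (Ici 0) := by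
  intro a ha b _ hab
  have ha : 0 ≤ a := ha
  dsimp only
  rw [div_lt_div_iff₀ (by positivity) (by positivity)]
  nlinarith

theorem tCrit_lt_of_rCrit_lt (h₁ : 0 < c₁) (h₂ : 0 < c₂) (h : c₁ + c₂ < 1) (ht : 0 ≤ t)
    (hr : rCrit c₁ c₂ < t ^ 2 / (1 + t ^ 2)) : tCrit c₁ c₂ < t := by
  rw [rCrit_eq h₁ h₂ h] at hr
  exact (strictMonoOn_sq_div_one_add_sq.lt_iff_lt (tCrit_pos h₁ h₂ h).le ht).1 hr

end Critical

end GammaCrit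

theorem stmt18_general (c₁ c₂ : ℝ)
    (hc₂ : 0 < c₂) (hc₂₁ : c₂ < c₁) (hc : c₁ + c₂ < 1)
    (dr dl tc rc : ℝ)
    (hdr : dr = c₁ + c₂ - 2*c₁*c₂ + 2*Real.sqrt (c₁*c₂*(1-c₁)*(1-c₂)))
    (hdl : dl = c₁ + c₂ - 2*c₁*c₂ - 2*Real.sqrt (c₁*c₂*(1-c₁)*(1-c₂)))
    (htc : tc = Real.sqrt ((c₁*c₂ + Real.sqrt (c₁*c₂*(1-c₁)*(1-c₂))) / (1 - c₁ - c₂)))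
    (hrc : rc = (c₁*c₂ + Real.sqrt (c₁*c₂*(1-c₁)*(1-c₂))) /
      ((1-c₁)*(1-c₂) + Real.sqrt (c₁*c₂*(1-c₁)*(1-c₂))))
    (γ : ℝ → ℝ)
    (hγ : ∀ t, γ t = (1 + (t^2)⁻¹*c₁) * (1 + (t^2)⁻¹*c₂) / (1 + (t^2)⁻¹)) :
    -- (a)
    (∀ t, 0 < t → dr ≤ γ t ∧ (γ t = dr ↔ t = tc)) ∧
    -- (b)
    (∀ t, 0 < t → tc ≤ t →
      0 ≤ γ t - (c₁ + c₂) - 2*c₁*c₂*(t^2)⁻¹ ∧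
      γ t - (c₁ + c₂) - Real.sqrt ((γ t - dl) * (γ t - dr)) = 2*c₁*c₂*(t^2)⁻¹) ∧
    -- (c)
    ((∀ t, 0 < t → (γ t < 1 ↔ Real.sqrt (c₁*c₂/(1 - c₁ - c₂)) < t)) ∧
      Real.sqrt (c₁*c₂/(1 - c₁ - c₂)) < tc) ∧
    -- (d)
    ((∀ t, 0 < t →
        γ t = (t^2/(1+t^2)) * (1 - c₁ + c₁ / (t^2/(1+t^2))) * (1 - c₂ + c₂ / (t^2/(1+t^2)))) ∧
      rc = tc^2 / (1 + tc^2) ∧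
      StrictMonoOn (fun t : ℝ => t^2/(1+t^2)) (Set.Ici 0) ∧
      (∀ t, 0 < t → rc < t^2/(1+t^2) → tc < t ∧ dr < γ t)) := by
  obtain rfl : γ = fun t => GammaCrit.gam c₁ c₂ (t ^ 2)⁻¹ := funext hγ
  subst hdr hdl htc hrc
  have hc₁ : 0 < c₁ := hc₂.trans hc₂₁
  open GammaCrit in
  exact ⟨fun t ht => ⟨dRight_le_gam hc₁ hc₂ hc t, gam_eq_dRight_iff hc₁ hc₂ hc ht⟩,
    fun t _ htc => ⟨gam_sub_nonneg hc₁ hc₂ hc htc, gam_sub_sqrt hc₁ hc₂ hc htc⟩,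
    ⟨fun t ht => gam_lt_one_iff_sqrt_lt hc ht, sqrt_lt_tCrit hc₁ hc₂ hc⟩,
    fun t ht => gam_inv_sq ht.ne', rCrit_eq hc₁ hc₂ hc, strictMonoOn_sq_div_one_add_sq,
    fun t ht hr =>
      have htc := tCrit_lt_of_rCrit_lt hc₁ hc₂ hc ht.le hr
      ⟨htc, dRight_lt_gam hc₁ hc₂ hc htc⟩⟩

/-- elementary properties of `γ(t) = (1+t⁻²c₁)(1+t⁻²c₂)/(1+t⁻²)`,
the threshold `t_c` and the critical value `r_c`. -/
theorem stmt18 (c₁ c₂ : ℝ)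
    (hc₂ : 0 < c₂) (hc₂₁ : c₂ < c₁) (hc₁ : c₁ < 1) (hc : c₁ + c₂ < 1)
    (dr dl tc rc : ℝ)
    (hdr : dr = c₁ + c₂ - 2*c₁*c₂ + 2*Real.sqrt (c₁*c₂*(1-c₁)*(1-c₂)))
    (hdl : dl = c₁ + c₂ - 2*c₁*c₂ - 2*Real.sqrt (c₁*c₂*(1-c₁)*(1-c₂)))
    (htc : tc = Real.sqrt ((c₁*c₂ + Real.sqrt (c₁*c₂*(1-c₁)*(1-c₂))) / (1 - c₁ - c₂)))
    (hrc : rc = (c₁*c₂ + Real.sqrt (c₁*c₂*(1-c₁)*(1-c₂))) /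
      ((1-c₁)*(1-c₂) + Real.sqrt (c₁*c₂*(1-c₁)*(1-c₂))))
    (γ : ℝ → ℝ)
    (hγ : ∀ t, γ t = (1 + (t^2)⁻¹*c₁) * (1 + (t^2)⁻¹*c₂) / (1 + (t^2)⁻¹)) :
    -- (a)
    (∀ t, 0 < t → dr ≤ γ t ∧ (γ t = dr ↔ t = tc)) ∧
    -- (b)
    (∀ t, 0 < t → tc ≤ t →
      0 ≤ γ t - (c₁ + c₂) - 2*c₁*c₂*(t^2)⁻¹ ∧
      γ t - (c₁ + c₂) - Real.sqrt ((γ t - dl) * (γ t - dr)) = 2*c₁*c₂*(t^2)⁻¹) ∧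
    -- (c)
    ((∀ t, 0 < t → (γ t < 1 ↔ Real.sqrt (c₁*c₂/(1 - c₁ - c₂)) < t)) ∧
      Real.sqrt (c₁*c₂/(1 - c₁ - c₂)) < tc) ∧
    -- (d)
    ((∀ t, 0 < t →
        γ t = (t^2/(1+t^2)) * (1 - c₁ + c₁ / (t^2/(1+t^2))) * (1 - c₂ + c₂ / (t^2/(1+t^2)))) ∧
      rc = tc^2 / (1 + tc^2) ∧
      StrictMonoOn (fun t : ℝ => t^2/(1+t^2)) (Set.Ici 0) ∧
      (∀ t, 0 < t → rc < t^2/(1+t^2) → tc < t ∧ dr < γ t)) :=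
  stmt18_general c₁ c₂ hc₂ hc₂₁ hc dr dl tc rc hdr hdl htc hrc γ hγ

end
end
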